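/- Let 𝒜_{(q₀,r)} = (Q,{a,b},δ) be an n-state synchronizing almost permutation automaton with sink state q₀ and pre-sink state r, and let k be a positive multiple of the order of the letter a. Then rt(𝒜_{(q₀,r)}(k,r)) ≤ rt(𝒜_{(q₀,r)}) + n·k; more precisely, if w = v₂v₃⋯v_n is a reset word for 𝒜_{(q₀,r)} factored so that for each d the prefix v₂⋯v_d is the shortest prefix mapping at least d states of Q to q₀, then the word w' = a^k v₂ a^k v₃ a^k ⋯ v_n a^k is a reset word for 𝒜_{(q₀,r)}(k,r). -/

import Mathlib

/-!
Read `w' = aᵏv₂aᵏ⋯vₙaᵏ` in `𝒜(k,r)`. As `aᵏ` is the identity on `Q`, a state `s ≠ q0` never passes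
through the sink while reading it, so `aᵏ` fixes `s` in `𝒜(k,r)` too; it sends `q0` and every tail
state to the absorbing state `t₀`. Hence a run of `𝒜` is followed faithfully by `𝒜(k,r)` as long
as it avoids `q0`, and is parked in `t₀` by the next `aᵏ` once it reaches `q0`, provided it reaches
`q0` only at the end of a block. The factorization guarantees this: a state first reaching `q0`
strictly inside `v_{d+1}` would make a proper prefix of `v₂⋯v_{d+1}` send `d + 1` states to `q0`.
For the bound, factor a shortest reset word this way; then `|w'| = |w| + n·k`.
-/

/-- The two letters of a binary alphabet. -/
inductive Letter where
  | a : Letter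
  | b : Letter
deriving DecidableEq

/-- Extension of a transition function `δ : Q → Letter → Q` to words
(lists of letters), acting on the left: `δ(q, uv) = δ(δ(q, u), v)`. -/
def deltaStar {Q : Type*} (δ : Q → Letter → Q) (q : Q) (w : List Letter) : Q :=
  w.foldl δ q

/-- `w` is a reset word for the automaton with transition function `δ`. -/
def IsResetWord {Q : Type*} (δ : Q → Letter → Q) (w : List Letter) : Prop :=
  ∀ p q : Q, deltaStar δ p w = deltaStar δ q w

/-- The reset threshold: the minimum length of a reset word. -/
noncomputable def resetThreshold {Q : Type*} (δ : Q → Letter → Q) : ℕ :=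
  sInf {l : ℕ | ∃ w : List Letter, IsResetWord δ w ∧ w.length = l}

/-- The tail extension `𝒜(k, r)` of a binary DFA `𝒜 = (Q, {a,b}, δ)` with sink
state `q0`: the state set is `Q ⊕ Fin k` with `Sum.inr i` playing the role of
the tail state `tᵢ`, and
`δ'(s,a) = δ(s,a)` for `s ∈ Q \ {q0}`, `δ'(q0,a) = t_{k-1}`, `δ'(t0,a) = t0`,
`δ'(tᵢ,a) = t_{i-1}` for `1 ≤ i ≤ k-1`; `δ'(s,b) = δ(s,b)` for `s ∈ Q \ {q0}`,
`δ'(t0,b) = t0`, and `δ'(s,b) = r` for `s ∈ {q0, t1, …, t_{k-1}}`. -/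
def tailExt {Q : Type*} [DecidableEq Q] (δ : Q → Letter → Q) (q0 r : Q)
    (k : ℕ) (hk : 0 < k) : Q ⊕ Fin k → Letter → Q ⊕ Fin k
  | Sum.inl s, Letter.a =>
      if s = q0 then Sum.inr ⟨k - 1, Nat.sub_lt hk Nat.one_pos⟩
      else Sum.inl (δ s Letter.a)
  | Sum.inl s, Letter.b =>
      if s = q0 then Sum.inl r else Sum.inl (δ s Letter.b)
  | Sum.inr i, Letter.a =>
      if (i : ℕ) = 0 then Sum.inr i
      else Sum.inr ⟨(i : ℕ) - 1, Nat.lt_of_le_of_lt (Nat.sub_le _ _) i.isLt⟩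
  | Sum.inr i, Letter.b =>
      if (i : ℕ) = 0 then Sum.inr i else Sum.inl r

section Words

variable {Q : Type*} {δ : Q → Letter → Q} {q0 : Q}

@[simp]
lemma deltaStar_nil (q : Q) : deltaStar δ q [] = q := rfl

@[simp]
lemma deltaStar_cons (q : Q) (ℓ : Letter) (u : List Letter) :
    deltaStar δ q (ℓ :: u) = deltaStar δ (δ q ℓ) u := rfl

lemma deltaStar_append (q : Q) (u v : List Letter) :
    deltaStar δ q (u ++ v) = deltaStar δ (deltaStar δ q u) v :=
  List.foldl_append

lemma deltaStar_replicate_mul_eq_self {ℓ : Letter} {j : ℕ}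
    (h : ∀ q, deltaStar δ q (List.replicate j ℓ) = q) (m : ℕ) (q : Q) :
    deltaStar δ q (List.replicate (m * j) ℓ) = q := by
  induction m with
  | zero => simp
  | succ m ih => rw [Nat.succ_mul, List.replicate_add, deltaStar_append, ih, h]

lemma isResetWord_of_forall_deltaStar_eq {w : List Letter} (z : Q)
    (h : ∀ q, deltaStar δ q w = z) : IsResetWord δ w :=
  fun p q => (h p).trans (h q).symm

lemma resetThreshold_le {w : List Letter} (hw : IsResetWord δ w) :
    resetThreshold δ ≤ w.length :=
  Nat.sInf_le ⟨w, hw, rfl⟩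

lemma exists_isResetWord_length_eq_resetThreshold (hsync : ∃ w, IsResetWord δ w) :
    ∃ w, IsResetWord δ w ∧ w.length = resetThreshold δ :=
  Nat.sInf_mem (s := {l | ∃ w, IsResetWord δ w ∧ w.length = l})
    (hsync.elim fun w hw => ⟨w.length, w, hw, rfl⟩)

lemma deltaStar_sink (hsink : ∀ ℓ, δ q0 ℓ = q0) (u : List Letter) : deltaStar δ q0 u = q0 := by
  induction u with
  | nil => rfl
  | cons ℓ u ih => rwa [deltaStar_cons, hsink]

lemma deltaStar_append_of_eq_sink (hsink : ∀ ℓ, δ q0 ℓ = q0) {q : Q} {u : List Letter}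
    (hq : deltaStar δ q u = q0) (v : List Letter) : deltaStar δ q (u ++ v) = q0 := by
  rw [deltaStar_append, hq, deltaStar_sink hsink]

lemma IsResetWord.deltaStar_eq_sink (hsink : ∀ ℓ, δ q0 ℓ = q0) {w : List Letter}
    (hw : IsResetWord δ w) (q : Q) : deltaStar δ q w = q0 :=
  (hw q q0).trans (deltaStar_sink hsink w)

lemma deltaStar_take_ne_sink_of_eq_self (hsink : ∀ ℓ, δ q0 ℓ = q0) {s : Q} {u : List Letter}
    (hu : deltaStar δ s u = s) (hs : s ≠ q0) (j : ℕ) : deltaStar δ s (u.take j) ≠ q0 :=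
  fun h => hs <| by rw [← hu, ← u.take_append_drop j, deltaStar_append_of_eq_sink hsink h]

end Words

lemma flatten_map_range_drop_take {α : Type*} (w : List α) (c : ℕ → ℕ) (h0 : c 0 = 0) (e : ℕ)
    (hc : ∀ i < e, c i ≤ c (i + 1)) :
    ((List.range e).map fun i => (w.take (c (i + 1))).drop (c i)).flatten = w.take (c e) := by
  induction e with
  | zero => simp [h0]
  | succ e ih =>
    rw [List.range_succ, List.map_append, List.flatten_append, ih fun i hi => hc i (by omega),
      List.map_singleton, List.flatten_singleton]
    conv_rhs => rw [← List.take_append_drop (c e) (w.take (c (e + 1)))]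
    rw [List.take_take, min_eq_left (hc e (Nat.lt_succ_self e))]

section SinkCount

variable {Q : Type*} [Fintype Q] [DecidableEq Q] {δ : Q → Letter → Q} {q0 : Q}

def sinkCount (δ : Q → Letter → Q) (q0 : Q) (u : List Letter) : ℕ :=
  (Finset.univ.filter fun q : Q => deltaStar δ q u = q0).card

lemma sinkCount_pos (hsink : ∀ ℓ, δ q0 ℓ = q0) (u : List Letter) : 0 < sinkCount δ q0 u :=
  Finset.card_pos.mpr ⟨q0, by simp [deltaStar_sink hsink]⟩

lemma sinkCount_lt_append (hsink : ∀ ℓ, δ q0 ℓ = q0) {u v : List Letter} {s : Q}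
    (hu : deltaStar δ s u ≠ q0) (huv : deltaStar δ s (u ++ v) = q0) :
    sinkCount δ q0 u < sinkCount δ q0 (u ++ v) := by
  refine Finset.card_lt_card ((Finset.ssubset_iff_of_subset fun q hq => ?_).mpr ⟨s, ?_, ?_⟩)
  · simp [deltaStar_append_of_eq_sink hsink (Finset.mem_filter.mp hq).2]
  · simpa using huv
  · simpa using hu

lemma sinkCount_eq_card_of_isResetWord (hsink : ∀ ℓ, δ q0 ℓ = q0) {w : List Letter}
    (hw : IsResetWord δ w) : sinkCount δ q0 w = Fintype.card Q := by
  simp [sinkCount, hw.deltaStar_eq_sink hsink]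

lemma isResetWord_of_sinkCount_eq_card {u : List Letter}
    (hu : sinkCount δ q0 u = Fintype.card Q) : IsResetWord δ u := by
  have := (Finset.card_eq_iff_eq_univ _).mp hu
  exact isResetWord_of_forall_deltaStar_eq q0 fun q => by
    simpa using (Finset.ext_iff.mp this q).mpr (Finset.mem_univ q)

-- `vs = [v₂, …, vₙ]`: `vs[i] = v_{i+2}` and `v₂⋯v_d = (vs.take (d - 1)).flatten`.
def IsSinkFactorization (δ : Q → Letter → Q) (q0 : Q) (n : ℕ) (w : List Letter)
    (vs : List (List Letter)) : Prop :=
  vs.length = n - 1 ∧ w = vs.flatten ∧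
    ∀ d, 2 ≤ d → d ≤ n → d ≤ sinkCount δ q0 (vs.take (d - 1)).flatten ∧
      ∀ u, u <+: w → u.length < ((vs.take (d - 1)).flatten).length → sinkCount δ q0 u < d

-- A run entering `q0` inside `vs[i]` would make a proper prefix of `v₂⋯v_{i+2}` send `i + 2`
-- states to `q0`.
lemma IsSinkFactorization.deltaStar_append_take_ne_sink (hsink : ∀ ℓ, δ q0 ℓ = q0) {n : ℕ}
    {w : List Letter} {vs : List (List Letter)} (hf : IsSinkFactorization δ q0 n w vs) {i : ℕ}
    (hi : i < vs.length) {s : Q} (hs : deltaStar δ s (vs.take i).flatten ≠ q0) {j : ℕ}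
    (hj : j < vs[i].length) : deltaStar δ s ((vs.take i).flatten ++ vs[i].take j) ≠ q0 := by
  obtain ⟨hlen, rfl, hcut⟩ := hf
  intro hsj
  have hblock : (vs.take (i + 1)).flatten = (vs.take i).flatten ++ vs[i] := by
    rw [List.take_succ_eq_append_getElem hi, List.flatten_concat]
  have hprev : i + 1 ≤ sinkCount δ q0 (vs.take i).flatten := by
    rcases Nat.eq_zero_or_pos i with rfl | hi0
    · exact sinkCount_pos hsink _
    · simpa using (hcut (i + 1) (by omega) (by omega)).1
  have hprefix : (vs.take i).flatten ++ vs[i].take j <+: vs.flatten :=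
    ((List.prefix_append_right_inj _).mpr (vs[i].take_prefix j)).trans
      (hblock ▸ (vs.take_prefix (i + 1)).flatten)
  have hshort := (hcut (i + 2) (by omega) (by omega)).2 _ hprefix (by simp [hblock]; omega)
  have := sinkCount_lt_append hsink hs hsj
  omega

lemma exists_isSinkFactorization (hsink : ∀ ℓ, δ q0 ℓ = q0) {n : ℕ}
    (hn : Fintype.card Q = n) {w : List Letter} (hw : IsResetWord δ w)
    (hmin : ∀ u, IsResetWord δ u → w.length ≤ u.length) :
    ∃ vs, IsSinkFactorization δ q0 n w vs := by
  have hn1 : 1 ≤ n := hn ▸ Fintype.card_pos_iff.mpr ⟨q0⟩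
  set cut : ℕ → ℕ := fun d => sInf {j | d ≤ sinkCount δ q0 (w.take j)}
  have hcut_le {d j : ℕ} (h : d ≤ sinkCount δ q0 (w.take j)) : cut d ≤ j := Nat.sInf_le h
  have hcut_spec {d : ℕ} (hd : d ≤ n) : d ≤ sinkCount δ q0 (w.take (cut d)) :=
    Nat.sInf_mem (s := {j | d ≤ sinkCount δ q0 (w.take j)})
      ⟨w.length, by simpa [sinkCount_eq_card_of_isResetWord hsink hw, hn]⟩
  have hcut_one : cut 1 = 0 := Nat.le_zero.mp (hcut_le (sinkCount_pos hsink _))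
  have hcut_n : cut n = w.length := by
    refine le_antisymm (hcut_le (by simp [sinkCount_eq_card_of_isResetWord hsink hw, hn])) ?_
    have hreset : IsResetWord δ (w.take (cut n)) :=
      isResetWord_of_sinkCount_eq_card (q0 := q0) <|
        le_antisymm (Finset.card_le_univ _) (hn.symm ▸ hcut_spec le_rfl)
    exact (hmin _ hreset).trans (List.length_take_le _ _)
  set vs := (List.range (n - 1)).map fun i => (w.take (cut (i + 2))).drop (cut (i + 1))
  have hprefix {d : ℕ} (hd1 : 1 ≤ d) (hdn : d ≤ n) :
      (vs.take (d - 1)).flatten = w.take (cut d) := by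
    rw [← List.map_take, List.take_range, min_eq_left (by omega),
      flatten_map_range_drop_take w (fun i => cut (i + 1)) hcut_one _
        fun i hi => hcut_le ((Nat.le_succ _).trans (hcut_spec (by omega)))]
    congr 2
    omega
  refine ⟨vs, by simp [vs], ?_, fun d hd2 hdn => ⟨?_, fun u hu hlt => ?_⟩⟩
  · have := hprefix hn1 le_rfl
    rwa [List.take_of_length_le (by simp [vs]), hcut_n, List.take_length, eq_comm] at this
  · exact hprefix (by omega) hdn ▸ hcut_spec hdn
  · rw [hprefix (by omega) hdn, List.length_take_of_le (hcut_le ?_)] at hlt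
    · rw [List.prefix_iff_eq_take.mp hu]
      by_contra! h
      have := hcut_le h
      omega
    · simp [sinkCount_eq_card_of_isResetWord hsink hw, hn, hdn]

end SinkCount

section TailExtension

variable {Q : Type*} [DecidableEq Q] {δ : Q → Letter → Q} {q0 r : Q} {k : ℕ} (hk : 0 < k)

-- Where, after each `a^k`, `𝒜(k,r)` holds the run of `𝒜` that is at `s`.
def tailExtState (q0 : Q) (s : Q) : Q ⊕ Fin k :=
  if s = q0 then Sum.inr ⟨0, hk⟩ else Sum.inl s

lemma tailExt_inl_of_ne {s : Q} (hs : s ≠ q0) (ℓ : Letter) :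
    tailExt δ q0 r k hk (Sum.inl s) ℓ = Sum.inl (δ s ℓ) := by
  cases ℓ <;> simp [tailExt, hs]

lemma tailExt_inr_a (i : Fin k) :
    tailExt δ q0 r k hk (Sum.inr i) Letter.a =
      Sum.inr ⟨i - 1, (Nat.sub_le _ _).trans_lt i.isLt⟩ := by
  simp only [tailExt]
  split_ifs with hi
  · exact congrArg Sum.inr (Fin.ext (by simp only; omega))
  · rfl

lemma deltaStar_tailExt_inr_replicate (j : ℕ) (i : Fin k) :
    deltaStar (tailExt δ q0 r k hk) (Sum.inr i) (List.replicate j Letter.a) =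
      Sum.inr ⟨i - j, (Nat.sub_le _ _).trans_lt i.isLt⟩ := by
  induction j generalizing i with
  | zero => rfl
  | succ j ih =>
    rw [List.replicate_succ, deltaStar_cons, tailExt_inr_a, ih]
    exact congrArg Sum.inr (Fin.ext (by simp only; omega))

lemma deltaStar_tailExt_inr_replicate_of_le {i : Fin k} {j : ℕ} (hij : (i : ℕ) ≤ j) :
    deltaStar (tailExt δ q0 r k hk) (Sum.inr i) (List.replicate j Letter.a) =
      Sum.inr ⟨0, hk⟩ := by
  rw [deltaStar_tailExt_inr_replicate]
  exact congrArg Sum.inr (Fin.ext (Nat.sub_eq_zero_of_le hij))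

lemma deltaStar_tailExt_t₀ (u : List Letter) :
    deltaStar (tailExt δ q0 r k hk) (Sum.inr ⟨0, hk⟩) u = Sum.inr ⟨0, hk⟩ := by
  induction u with
  | nil => rfl
  | cons ℓ u ih => cases ℓ <;> simpa [tailExt] using ih

lemma deltaStar_tailExt_inl_of_forall_take_ne {s : Q} {u : List Letter}
    (hu : ∀ j < u.length, deltaStar δ s (u.take j) ≠ q0) :
    deltaStar (tailExt δ q0 r k hk) (Sum.inl s) u = Sum.inl (deltaStar δ s u) := by
  induction u generalizing s with
  | nil => rfl
  | cons ℓ u ih =>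
    have hs : s ≠ q0 := hu 0 (Nat.succ_pos _)
    rw [deltaStar_cons, deltaStar_cons, tailExt_inl_of_ne hk hs]
    exact ih fun j hj => by simpa using hu (j + 1) (Nat.succ_lt_succ hj)

lemma deltaStar_tailExt_replicate (hsink : ∀ ℓ, δ q0 ℓ = q0)
    (hak : ∀ q, deltaStar δ q (List.replicate k Letter.a) = q) (s : Q) :
    deltaStar (tailExt δ q0 r k hk) (Sum.inl s) (List.replicate k Letter.a) =
      tailExtState hk q0 s := by
  unfold tailExtState
  split_ifs with hs
  · subst hs
    obtain ⟨k, rfl⟩ := Nat.exists_eq_add_of_lt hk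
    rw [List.replicate_succ, deltaStar_cons]
    simpa [tailExt] using deltaStar_tailExt_inr_replicate_of_le (r := r) (δ := δ) hk
      (i := ⟨k, by omega⟩) le_rfl
  · rw [deltaStar_tailExt_inl_of_forall_take_ne hk
      fun j _ => deltaStar_take_ne_sink_of_eq_self hsink (hak s) hs j, hak]

lemma deltaStar_tailExtState_append_replicate (hsink : ∀ ℓ, δ q0 ℓ = q0)
    (hak : ∀ q, deltaStar δ q (List.replicate k Letter.a) = q) {p : Q} {v : List Letter}
    (hv : p ≠ q0 → ∀ j < v.length, deltaStar δ p (v.take j) ≠ q0) :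
    deltaStar (tailExt δ q0 r k hk) (tailExtState hk q0 p) (v ++ List.replicate k Letter.a) =
      tailExtState hk q0 (deltaStar δ p v) := by
  by_cases hp : p = q0
  · subst hp
    simp only [tailExtState, if_pos, deltaStar_tailExt_t₀, deltaStar_sink hsink]
  · rw [tailExtState, if_neg hp, deltaStar_append,
      deltaStar_tailExt_inl_of_forall_take_ne hk (hv hp), deltaStar_tailExt_replicate hk hsink hak]

lemma deltaStar_tailExtState_flatten_map_append_replicate (hsink : ∀ ℓ, δ q0 ℓ = q0)
    (hak : ∀ q, deltaStar δ q (List.replicate k Letter.a) = q) {s : Q}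
    {vs : List (List Letter)}
    (hvs : ∀ i (hi : i < vs.length), deltaStar δ s (vs.take i).flatten ≠ q0 →
      ∀ j < vs[i].length, deltaStar δ s ((vs.take i).flatten ++ vs[i].take j) ≠ q0) :
    deltaStar (tailExt δ q0 r k hk) (tailExtState hk q0 s)
        (vs.map (· ++ List.replicate k Letter.a)).flatten =
      tailExtState hk q0 (deltaStar δ s vs.flatten) := by
  induction vs generalizing s with
  | nil => rfl
  | cons v vs ih =>
    rw [List.map_cons, List.flatten_cons, deltaStar_append,
      deltaStar_tailExtState_append_replicate (p := s) (v := v) hk hsink hak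
        fun hs j hj => hvs 0 (by simp) hs j hj, ih, List.flatten_cons, deltaStar_append]
    intro i hi hne j hj
    have h := hvs (i + 1) (by simpa using hi) (by simpa [deltaStar_append] using hne) j hj
    rwa [List.take_succ_cons, List.flatten_cons, List.append_assoc, deltaStar_append] at h

end TailExtension

lemma length_flatten_map_append {α : Type*} (vs : List (List α)) (u : List α) :
    (vs.map (· ++ u)).flatten.length = vs.flatten.length + vs.length * u.length := by
  induction vs with
  | nil => simp
  | cons v vs ih =>
    simp only [List.map_cons, List.flatten_cons, List.length_append, ih, List.length_cons]
    ring

lemma IsSinkFactorization.isResetWord_tailExt {Q : Type*} [Fintype Q] [DecidableEq Q]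
    {δ : Q → Letter → Q} {q0 r : Q} {k : ℕ} (hk : 0 < k) (hsink : ∀ ℓ, δ q0 ℓ = q0)
    (hak : ∀ q, deltaStar δ q (List.replicate k Letter.a) = q) {n : ℕ} {w : List Letter}
    {vs : List (List Letter)} (hw : IsResetWord δ w) (hf : IsSinkFactorization δ q0 n w vs) :
    IsResetWord (tailExt δ q0 r k hk)
      (List.replicate k Letter.a ++ (vs.map (· ++ List.replicate k Letter.a)).flatten) := by
  refine isResetWord_of_forall_deltaStar_eq (Sum.inr ⟨0, hk⟩) fun p => ?_
  rw [deltaStar_append]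
  rcases p with s | i
  · rw [deltaStar_tailExt_replicate hk hsink hak,
      deltaStar_tailExtState_flatten_map_append_replicate hk hsink hak
        fun i hi hs j hj => hf.deltaStar_append_take_ne_sink hsink hi hs hj,
      ← hf.2.1, hw.deltaStar_eq_sink hsink, tailExtState, if_pos rfl]
  · rw [deltaStar_tailExt_inr_replicate_of_le hk i.isLt.le, deltaStar_tailExt_t₀]

theorem resetThreshold_tailExt_le_general
    {Q : Type*} [Fintype Q] [DecidableEq Q]
    (δ : Q → Letter → Q) (q0 r : Q) (n : ℕ)
    -- `𝒜` has `n` states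
    (hn : Fintype.card Q = n)
    -- `q0` is a sink state
    (hsink : ∀ ℓ : Letter, δ q0 ℓ = q0)
    -- `𝒜` is synchronizing
    (hsync : ∃ w : List Letter, IsResetWord δ w)
    -- `ord` is the order of the letter `a`: the least `j ≥ 1` such that `a^j` acts as the identity
    (ord : ℕ)
    (hordid : ∀ q : Q, deltaStar δ q (List.replicate ord Letter.a) = q)
    -- `k` is a positive multiple of the order of `a`
    (k m : ℕ) (hkm : k = m * ord) (hk : 0 < k) :
    resetThreshold (tailExt δ q0 r k hk) ≤ resetThreshold δ + n * k ∧
      ∀ (w : List Letter) (vs : List (List Letter)),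
        IsResetWord δ w →
        vs.length = n - 1 →
        w = vs.flatten →
        (∀ d : ℕ, 2 ≤ d → d ≤ n →
          -- the prefix `v₂⋯v_d` maps at least `d` states of `Q` to `q0` …
          d ≤ (Finset.univ.filter
                (fun q : Q => deltaStar δ q ((vs.take (d - 1)).flatten) = q0)).card ∧
          -- … and it is the shortest prefix of `w` doing so
          ∀ u : List Letter, u <+: w →
            u.length < ((vs.take (d - 1)).flatten).length →
            (Finset.univ.filter (fun q : Q => deltaStar δ q u = q0)).card < d) →
        IsResetWord (tailExt δ q0 r k hk)
          (List.replicate k Letter.a ++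
            (vs.map (fun v => v ++ List.replicate k Letter.a)).flatten) := by
  have hak : ∀ q, deltaStar δ q (List.replicate k Letter.a) = q :=
    hkm ▸ deltaStar_replicate_mul_eq_self hordid m
  refine ⟨?_, fun w vs hw hlen hflat hcut =>
    IsSinkFactorization.isResetWord_tailExt hk hsink hak hw ⟨hlen, hflat, hcut⟩⟩
  obtain ⟨w, hw, hwlen⟩ := exists_isResetWord_length_eq_resetThreshold hsync
  obtain ⟨vs, hf⟩ := exists_isSinkFactorization hsink hn hw fun u hu => hwlen ▸ resetThreshold_le hu
  have hn1 : 1 ≤ n := hn ▸ Fintype.card_pos_iff.mpr ⟨q0⟩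
  calc resetThreshold (tailExt δ q0 r k hk)
      ≤ (List.replicate k Letter.a ++ (vs.map (· ++ List.replicate k Letter.a)).flatten).length :=
        resetThreshold_le (hf.isResetWord_tailExt hk hsink hak hw)
    _ = resetThreshold δ + n * k := by
      rw [List.length_append, length_flatten_map_append, ← hf.2.1, hf.1, hwlen,
        List.length_replicate]
      obtain ⟨n, rfl⟩ := Nat.exists_eq_add_of_le' hn1
      simp only [Nat.add_sub_cancel]
      ring

/-- Upper bound in Vorel's lemma: `rt(𝒜(k,r)) ≤ rt(𝒜) + n·k`; more precisely,
if `w = v₂v₃⋯vₙ` is a reset word for `𝒜` factored so that for each `d` the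
prefix `v₂⋯v_d` is the shortest prefix of `w` mapping at least `d` states to
`q0`, then `w' = aᵏv₂aᵏv₃aᵏ⋯vₙaᵏ` is a reset word for `𝒜(k,r)`. -/
theorem resetThreshold_tailExt_le
    {Q : Type*} [Fintype Q] [DecidableEq Q]
    (δ : Q → Letter → Q) (q0 r : Q) (n : ℕ)
    -- `𝒜` has `n` states
    (hn : Fintype.card Q = n)
    -- `q0` is a sink state
    (hsink : ∀ ℓ : Letter, δ q0 ℓ = q0)
    -- `𝒜` is synchronizing
    (hsync : ∃ w : List Letter, IsResetWord δ w)
    -- `r` is the unique state of `Q \ {q0}` with `δ(r, b) = q0` (the pre-sink state)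
    (hrne : r ≠ q0)
    (hrb : δ r Letter.b = q0)
    (hruniq : ∀ s : Q, s ≠ q0 → δ s Letter.b = q0 → s = r)
    -- the letter `b` acts as a permutation on `Q \ {r}`
    (hb : Set.BijOn (fun s => δ s Letter.b) {r}ᶜ {r}ᶜ)
    -- the letter `a` acts as a permutation on `Q`
    (ha : Function.Bijective fun s => δ s Letter.a)
    -- `ord` is the order of the letter `a`: the least `j ≥ 1` such that `a^j` acts as the identity
    (ord : ℕ) (hord : 0 < ord)
    (hordid : ∀ q : Q, deltaStar δ q (List.replicate ord Letter.a) = q)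
    (hordleast : ∀ j : ℕ, 0 < j →
      (∀ q : Q, deltaStar δ q (List.replicate j Letter.a) = q) → ord ≤ j)
    -- `k` is a positive multiple of the order of `a`
    (k m : ℕ) (hm : 0 < m) (hkm : k = m * ord) (hk : 0 < k) :
    resetThreshold (tailExt δ q0 r k hk) ≤ resetThreshold δ + n * k ∧
      ∀ (w : List Letter) (vs : List (List Letter)),
        IsResetWord δ w →
        vs.length = n - 1 →
        w = vs.flatten →
        (∀ d : ℕ, 2 ≤ d → d ≤ n →
          -- the prefix `v₂⋯v_d` maps at least `d` states of `Q` to `q0` …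
          d ≤ (Finset.univ.filter
                (fun q : Q => deltaStar δ q ((vs.take (d - 1)).flatten) = q0)).card ∧
          -- … and it is the shortest prefix of `w` doing so
          ∀ u : List Letter, u <+: w →
            u.length < ((vs.take (d - 1)).flatten).length →
            (Finset.univ.filter (fun q : Q => deltaStar δ q u = q0)).card < d) →
        IsResetWord (tailExt δ q0 r k hk)
          (List.replicate k Letter.a ++
            (vs.map (fun v => v ++ List.replicate k Letter.a)).flatten) :=
  resetThreshold_tailExt_le_general δ q0 r n hn hsink hsync ord hordid k m hkm hk
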